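/- The continuous compactly supported functions C_c(ℝⁿ) are dense in Ξ for the norm ‖·‖_A. -/
import Mathlib


open MeasureTheory Filter ComplexConjugate

noncomputable section

/-- The embedding of the integer lattice `ℤⁿ` into `ℝⁿ`. -/
def latt {n : ℕ} (p : Fin n → ℤ) : Fin n → ℝ := fun i => (p i : ℝ)

/-- The periodization of the square modulus of `ξ`. -/
def perSum {n : ℕ} (ξ : (Fin n → ℝ) → ℂ) (x : Fin n → ℝ) : ℝ :=
  ∑' p : Fin n → ℤ, ‖ξ (x - latt p)‖ ^ 2

/-- Membership in the module `Ξ`: bounded continuous functions whose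
periodization of the square modulus is (summable,) uniformly bounded and continuous. -/
def InXi {n : ℕ} (ξ : (Fin n → ℝ) → ℂ) : Prop :=
  Continuous ξ ∧ (∃ M, ∀ x, ‖ξ x‖ ≤ M) ∧
  (∀ x, Summable fun p : Fin n → ℤ => ‖ξ (x - latt p)‖ ^ 2) ∧
  (∃ K, ∀ x, perSum ξ x ≤ K) ∧ Continuous (perSum ξ)

/-- The norm `‖ξ‖_A = sup_x (∑_{p∈ℤⁿ} |ξ(x-p)|²)^{1/2}`. -/
def normA {n : ℕ} (ξ : (Fin n → ℝ) → ℂ) : ℝ := Real.sqrt (⨆ x, perSum ξ x)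

/-- The `C(𝕋ⁿ)`-valued inner product `⟨ξ,η⟩_A(x) = ∑_{p∈ℤⁿ} conj(ξ(x-p)) η(x-p)`. -/
def innerA {n : ℕ} (ξ η : (Fin n → ℝ) → ℂ) (x : Fin n → ℝ) : ℂ :=
  ∑' p : Fin n → ℤ, conj (ξ (x - latt p)) * η (x - latt p)

/-- Auxiliary: the periodization is ℤⁿ-periodic. -/
lemma perSum_periodic {n : ℕ} (η : (Fin n → ℝ) → ℂ) (q : Fin n → ℤ) (x : Fin n → ℝ) :
    perSum η (x + latt q) = perSum η x := by
  have hpt : ∀ p : Fin n → ℤ, x + latt q - latt (p + q) = x - latt p := by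
    intro p
    funext i
    simp only [latt, Pi.add_apply, Pi.sub_apply]
    push_cast
    ring
  calc perSum η (x + latt q) = ∑' p, ‖η (x + latt q - latt p)‖^2 := rfl
    _ = ∑' p, ‖η (x + latt q - latt (p + q))‖^2 := ((Equiv.addRight q).tsum_eq _).symm
    _ = ∑' p, ‖η (x - latt p)‖^2 := tsum_congr fun p => by rw [hpt p]
    _ = perSum η x := rfl

theorem stmt6 {n : ℕ} (ξ : (Fin n → ℝ) → ℂ) (hξ : InXi ξ) :
    ∀ ε > 0, ∃ g : (Fin n → ℝ) → ℂ,
      Continuous g ∧ HasCompactSupport g ∧ normA (fun x => ξ x - g x) < ε := by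
  classical
  obtain ⟨hcont, -, hsum, -, hpc⟩ := hξ
  intro ε hε
  have hδ : (0:ℝ) < ε^2/2 := by positivity
  set K : Set (Fin n → ℝ) := Set.Icc 0 1 with hKdef
  have hKcomp : IsCompact K := isCompact_Icc
  -- the tail function
  set tail : Finset (Fin n → ℤ) → (Fin n → ℝ) → ℝ :=
    fun S x => perSum ξ x - ∑ p ∈ S, ‖ξ (x - latt p)‖^2 with htaildef
  have htail_cont : ∀ S, Continuous (tail S) := by
    intro S
    apply hpc.sub
    apply continuous_finset_sum
    intro p _
    exact ((hcont.comp (continuous_id.sub continuous_const)).norm.pow 2)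
  -- small tails pointwise
  have hchoice : ∀ x : Fin n → ℝ, ∃ S : Finset (Fin n → ℤ), tail S x < ε^2/2 := by
    intro x
    have h1 : Tendsto (fun S : Finset (Fin n → ℤ) => ∑ p ∈ S, ‖ξ (x - latt p)‖^2)
        atTop (nhds (perSum ξ x)) := (hsum x).hasSum
    have h2 : Tendsto (fun S : Finset (Fin n → ℤ) => tail S x) atTop (nhds 0) := by
      have := tendsto_const_nhds (f := atTop (α := Finset (Fin n → ℤ)))
        (x := perSum ξ x) |>.sub h1
      simpa using this
    obtain ⟨S, hS⟩ := ((tendsto_order.1 h2).2 _ hδ).exists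
    exact ⟨S, hS⟩
  choose Sfun hSfun using hchoice
  -- compactness argument
  have hcover : ∀ x ∈ K, {y | tail (Sfun x) y < ε^2/2} ∈ nhds x := by
    intro x _
    exact (isOpen_lt (htail_cont (Sfun x)) continuous_const).mem_nhds (hSfun x)
  obtain ⟨t, -, ht⟩ := hKcomp.elim_nhds_subcover _ hcover
  set S : Finset (Fin n → ℤ) := t.sup Sfun with hSdef
  have htail_mono : ∀ (S₁ S₂ : Finset (Fin n → ℤ)), S₁ ⊆ S₂ →
      ∀ x, tail S₂ x ≤ tail S₁ x := by
    intro S₁ S₂ hsub x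
    have : ∑ p ∈ S₁, ‖ξ (x - latt p)‖^2 ≤ ∑ p ∈ S₂, ‖ξ (x - latt p)‖^2 :=
      Finset.sum_le_sum_of_subset_of_nonneg hsub (fun p _ _ => by positivity)
    simp only [htaildef]
    linarith
  have hKtail : ∀ y ∈ K, tail S y < ε^2/2 := by
    intro y hy
    obtain ⟨x, hxt, hyx⟩ := Set.mem_iUnion₂.1 (ht hy)
    exact lt_of_le_of_lt (htail_mono _ _ (Finset.le_sup hxt) y) hyx
  clear_value S
  clear hSdef
  -- compact set where the cutoff equals 1
  set C : Set (Fin n → ℝ) := ⋃ p ∈ (S : Set (Fin n → ℤ)), (fun y => y - latt p) '' K with hCdef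
  have hCcomp : IsCompact C := S.finite_toSet.isCompact_biUnion
    (fun p _ => hKcomp.image (continuous_id.sub continuous_const))
  obtain ⟨φ, hφ1, -, hφsupp, hφ01⟩ :=
    exists_continuous_one_zero_of_isCompact hCcomp isClosed_empty (by simp : Disjoint C ∅)
  refine ⟨fun x => ξ x * (φ x : ℂ), hcont.mul (Complex.continuous_ofReal.comp φ.continuous),
    ?_, ?_⟩
  · exact HasCompactSupport.mul_left (hφsupp.comp_left (g := (Complex.ofReal)) (by simp))
  · rw [normA, Real.sqrt_lt' hε]
    have key : ∀ x, perSum (fun z => ξ z - ξ z * (φ z : ℂ)) x ≤ ε^2/2 := by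
      intro x
      set q : Fin n → ℤ := fun i => ⌊x i⌋ with hq
      set y : Fin n → ℝ := fun i => Int.fract (x i) with hy
      have hxy : x = y + latt q := by
        funext i
        show x i = Int.fract (x i) + (↑⌊x i⌋ : ℝ)
        rw [Int.fract]
        ring
      have hyK : y ∈ K := by
        rw [hKdef]
        constructor
        · intro i; exact Int.fract_nonneg _
        · intro i; exact (Int.fract_lt_one _).le
      rw [hxy, perSum_periodic]
      set a : (Fin n → ℤ) → ℝ :=
        fun p => ‖ξ (y - latt p) - ξ (y - latt p) * (φ (y - latt p) : ℂ)‖^2 with ha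
      set b : (Fin n → ℤ) → ℝ := fun p => ‖ξ (y - latt p)‖^2 with hb
      have hsum_b : Summable b := hsum y
      have hle : ∀ p, a p ≤ b p := by
        intro p
        rw [ha, hb]
        dsimp only
        have hnorm : ‖ξ (y - latt p) - ξ (y - latt p) * (φ (y - latt p) : ℂ)‖
            = ‖ξ (y - latt p)‖ * |1 - φ (y - latt p)| := by
          rw [← mul_one_sub, norm_mul]
          congr 1
          rw [← Complex.ofReal_one, ← Complex.ofReal_sub, Complex.norm_real, Real.norm_eq_abs]
        rw [hnorm]
        have h01 := hφ01 (y - latt p)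
        have habs : |1 - φ (y - latt p)| ≤ 1 := by
          rw [abs_le]
          constructor
          · linarith [h01.2]
          · linarith [h01.1]
        calc (‖ξ (y - latt p)‖ * |1 - φ (y - latt p)|)^2
            ≤ (‖ξ (y - latt p)‖ * 1)^2 := by
              apply pow_le_pow_left₀ (by positivity)
              exact mul_le_mul_of_nonneg_left habs (norm_nonneg _)
          _ = ‖ξ (y - latt p)‖^2 := by ring
      have hzero : ∀ p ∈ S, a p = 0 := by
        intro p hp
        have hmem : y - latt p ∈ C := by
          rw [hCdef]
          exact Set.mem_biUnion (by exact_mod_cast hp) ⟨y, hyK, rfl⟩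
        have h1 := hφ1 hmem
        simp only [Pi.one_apply] at h1
        rw [ha]
        dsimp only
        rw [h1]
        simp
      have hsum_a : Summable a :=
        Summable.of_nonneg_of_le (fun p => by rw [ha]; positivity) hle hsum_b
      have hsum_s : Summable (fun p => if p ∈ S then b p else 0) := by
        apply Summable.of_nonneg_of_le _ _ hsum_b
        · intro p
          split
          · rw [hb]; positivity
          · exact le_rfl
        · intro p
          split
          · exact le_rfl
          · rw [hb]; positivity
      have h1 : ∑' p, (a p + if p ∈ S then b p else 0) ≤ ∑' p, b p := by
        apply Summable.tsum_le_tsum _ (hsum_a.add hsum_s) hsum_b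
        intro p
        by_cases hp : p ∈ S
        · rw [if_pos hp, hzero p hp, zero_add]
        · rw [if_neg hp, add_zero]
          exact hle p
      have h2 : ∑' p, (a p + if p ∈ S then b p else 0)
          = (∑' p, a p) + ∑' p, (if p ∈ S then b p else 0) := Summable.tsum_add hsum_a hsum_s
      have h3 : ∑' p, (if p ∈ S then b p else 0) = ∑ p ∈ S, b p := by
        rw [tsum_eq_sum (s := S) (fun p hp => if_neg hp)]
        exact Finset.sum_congr rfl (fun p hp => if_pos hp)
      have h4 : ∑' p, a p ≤ tail S y := by
        rw [htaildef]
        dsimp only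
        have : perSum ξ y = ∑' p, b p := rfl
        rw [this]
        rw [h2, h3] at h1
        have hbb : ∑ p ∈ S, ‖ξ (y - latt p)‖ ^ 2 = ∑ p ∈ S, b p := rfl
        rw [hbb]
        linarith
      calc perSum (fun z => ξ z - ξ z * (φ z : ℂ)) y = ∑' p, a p := rfl
        _ ≤ tail S y := h4
        _ ≤ ε^2/2 := (hKtail y hyK).le
    calc (⨆ x, perSum (fun z => ξ z - ξ z * (φ z : ℂ)) x) ≤ ε^2/2 := ciSup_le key
      _ < ε^2 := by linarith
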